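/- arXiv:2208.01921 — 6 statements merged into one kernel-verified Lean document; each statement's English description precedes it below -/
import Mathlib

section
/- Let p be an odd prime and let D be the discriminant form (Z/pZ)^n with quadratic form q(x) = (a_1 x_1^2 + ... + a_n x_n^2)/p mod 1 where each a_i is coprime to p, and suppose n is even. Then the number of elements γ ∈ D with q(γ) = j/p mod 1 equals p^{n-1} + ε (−1|p)^{n/2} (p·δ(j mod p) − 1) p^{(n−2)/2}, where ε = ((2a_1···2a_n)|p) is the Legendre symbol and δ(j mod p) = 1 if p | j and 0 otherwise. -/
section Aux

variable (p : ℕ) [Fact p.Prime] (hp : p ≠ 2)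

noncomputable def qc (u : ZMod p) : ℚ := ((quadraticChar (ZMod p) u : ℤ) : ℚ)

lemma ringChar_ne (hp : p ≠ 2) : ringChar (ZMod p) ≠ 2 := by
  rw [ZMod.ringChar_zmod_n]; exact hp

lemma qc_mul (u v : ZMod p) : qc p (u * v) = qc p u * qc p v := by
  unfold qc; rw [map_mul]; push_cast; ring

lemma qc_sum_zero (hp : p ≠ 2) : ∑ u : ZMod p, qc p u = 0 := by
  unfold qc
  rw [← Int.cast_sum]
  rw [quadraticChar_sum_zero (ringChar_ne p hp)]
  simp

lemma qc_sq_one {u : ZMod p} (hu : u ≠ 0) : qc p u * qc p u = 1 := by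
  unfold qc
  rw [← Int.cast_mul, ← pow_two, quadraticChar_sq_one hu]
  simp

lemma qc_count (hp : p ≠ 2) (b : ZMod p) :
    (∑ x : ZMod p, if x ^ 2 = b then (1:ℚ) else 0) = 1 + qc p b := by
  rw [Finset.sum_boole]
  have := quadraticChar_card_sqrts (ringChar_ne p hp) b
  unfold qc
  rw [show (Finset.univ.filter fun x : ZMod p => x ^ 2 = b) = {x : ZMod p | x ^ 2 = b}.toFinset by
    ext x; simp]
  rw_mod_cast [this]
  push_cast
  ring

lemma jacobi_one (hp : p ≠ 2) :
    ∑ u : ZMod p, (quadraticChar (ZMod p) u * quadraticChar (ZMod p) (1 - u) : ℤ)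
      = - quadraticChar (ZMod p) (-1) := by
  have h := jacobiSum_nontrivial_inv (quadraticChar_ne_one (ringChar_ne p hp))
  rwa [(quadraticChar_isQuadratic (ZMod p)).inv, jacobiSum] at h

lemma jacobi (hp : p ≠ 2) (j : ZMod p) :
    ∑ u : ZMod p, qc p u * qc p (j - u)
      = qc p (-1) * ((p : ℚ) * (if j = 0 then 1 else 0) - 1) := by
  rcases eq_or_ne j 0 with rfl | hj
  · simp only [if_pos rfl, zero_sub]
    have : ∀ u : ZMod p, qc p u * qc p (-u) = qc p (-1) * (qc p u * qc p u) := by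
      intro u
      rw [show -u = -1 * u by ring, qc_mul]; ring
    rw [Finset.sum_congr rfl fun u _ => this u, ← Finset.mul_sum]
    have h2 : ∑ u : ZMod p, qc p u * qc p u
        = ∑ u : ZMod p, (if u = 0 then (0:ℚ) else 1) := by
      refine Finset.sum_congr rfl fun u _ => ?_
      rcases eq_or_ne u 0 with rfl | hu
      · simp [qc, quadraticChar_zero]
      · rw [qc_sq_one p hu, if_neg hu]
    rw [h2]
    have hcard : ∑ u : ZMod p, (if u = 0 then (0:ℚ) else 1) = (p : ℚ) - 1 := by
      have e0 : ∀ u : ZMod p, (if u = 0 then (0:ℚ) else 1) = 1 - if u = 0 then 1 else 0 := by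
        intro u; split <;> norm_num
      simp only [e0, Finset.sum_sub_distrib, Finset.sum_const, Finset.card_univ,
        ZMod.card, nsmul_eq_mul, mul_one, Finset.sum_ite_eq', Finset.mem_univ, if_true]
    rw [hcard]; ring_nf; simp
  · rw [if_neg hj]
    have key : ∑ u : ZMod p, qc p u * qc p (j - u)
        = ∑ w : ZMod p, qc p (j * w) * qc p (j - j * w) := by
      exact (Fintype.sum_equiv (Equiv.mulLeft₀ j hj) _ _ fun w => rfl).symm
    rw [key]
    have e2 : ∀ w : ZMod p, qc p (j * w) * qc p (j - j * w)
        = qc p w * qc p (1 - w) := by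
      intro w
      rw [show j - j * w = j * (1 - w) by ring, qc_mul, qc_mul]
      linear_combination (qc p w * qc p (1 - w)) * qc_sq_one p hj
    rw [Finset.sum_congr rfl fun w _ => e2 w]
    unfold qc
    simp only [← Int.cast_mul]
    rw [← Int.cast_sum, jacobi_one p hp]
    push_cast
    ring

lemma qc_inv_mul (a u : ZMod p) (ha : a ≠ 0) : qc p (a⁻¹ * u) = qc p a * qc p u := by
  have h1 : qc p a * qc p (a⁻¹ * u) = qc p u := by
    rw [← qc_mul, show a * (a⁻¹ * u) = (a * a⁻¹) * u by ring, mul_inv_cancel₀ ha, one_mul]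
  linear_combination qc p a * h1 - qc p (a⁻¹ * u) * qc_sq_one p ha

lemma sum_sub_sq (hp : p ≠ 2) (a : ZMod p) (ha : a ≠ 0) (f : ZMod p → ℚ) (j : ZMod p) :
    ∑ x : ZMod p, f (j - a * x ^ 2) = ∑ u : ZMod p, (1 + qc p a * qc p u) * f (j - u) := by
  have hcount : ∀ u : ZMod p, (∑ x : ZMod p, if a * x ^ 2 = u then (1:ℚ) else 0)
      = 1 + qc p a * qc p u := by
    intro u
    have hc : ∀ x : ZMod p, (a * x ^ 2 = u) ↔ (x ^ 2 = a⁻¹ * u) := by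
      intro x
      constructor
      · intro h; rw [← h, show a⁻¹ * (a * x^2) = (a⁻¹ * a) * x^2 by ring,
          inv_mul_cancel₀ ha, one_mul]
      · intro h; rw [h, show a * (a⁻¹ * u) = (a * a⁻¹) * u by ring,
          mul_inv_cancel₀ ha, one_mul]
    simp only [hc]
    rw [qc_count p hp (a⁻¹ * u), qc_inv_mul p a u ha]
  calc ∑ x : ZMod p, f (j - a * x ^ 2)
      = ∑ x : ZMod p, ∑ u : ZMod p, if a * x ^ 2 = u then f (j - u) else 0 := by
        refine Finset.sum_congr rfl fun x _ => ?_
        rw [Finset.sum_ite_eq Finset.univ (a * x ^ 2) (fun u => f (j - u))]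
        simp
    _ = ∑ u : ZMod p, ∑ x : ZMod p, if a * x ^ 2 = u then f (j - u) else 0 :=
        Finset.sum_comm
    _ = ∑ u : ZMod p, (1 + qc p a * qc p u) * f (j - u) := by
        refine Finset.sum_congr rfl fun u _ => ?_
        rw [← hcount u, Finset.sum_mul]
        refine Finset.sum_congr rfl fun x _ => ?_
        split <;> simp

lemma step (hp : p ≠ 2) (a : ZMod p) (ha : a ≠ 0) (A B C : ℚ) (j : ZMod p) :
    ∑ x : ZMod p, (A + B * qc p (j - a * x ^ 2)
        + C * (if j - a * x ^ 2 = 0 then 1 else 0))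
      = ((p:ℚ) * A + C - qc p a * B * qc p (-1))
        + (qc p a * C) * qc p j
        + (p:ℚ) * qc p a * B * qc p (-1) * (if j = 0 then 1 else 0) := by
  rw [sum_sub_sq p hp a ha (fun t => A + B * qc p t + C * (if t = 0 then 1 else 0)) j]
  have expand : ∀ u : ZMod p,
      (1 + qc p a * qc p u) * (A + B * qc p (j - u) + C * (if j - u = 0 then 1 else 0))
      = (A + (B * qc p (j - u) + C * (if j - u = 0 then 1 else 0)))
        + ((qc p a * A) * qc p u + ((qc p a * B) * (qc p u * qc p (j - u))
            + (qc p a * C) * (qc p u * (if j - u = 0 then 1 else 0)))) := fun u => by ring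
  simp only [expand]
  have hdelta : ∀ u : ZMod p, ((if j - u = 0 then (1:ℚ) else 0)) = if j = u then 1 else 0 := by
    intro u; simp [sub_eq_zero]
  have s1 : ∑ u : ZMod p, qc p (j - u) = 0 := by
    rw [← qc_sum_zero p hp]
    exact Fintype.sum_equiv (Equiv.subLeft j) _ _ fun u => rfl
  have s2 : ∑ u : ZMod p, (if j - u = 0 then (1:ℚ) else 0) = 1 := by
    simp only [hdelta]
    rw [Finset.sum_ite_eq Finset.univ j (fun _ => (1:ℚ))]; simp
  have s5 : ∑ u : ZMod p, qc p u * (if j - u = 0 then (1:ℚ) else 0) = qc p j := by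
    simp only [hdelta]
    have : ∀ u : ZMod p, qc p u * (if j = u then (1:ℚ) else 0)
        = if j = u then qc p u else 0 := by intro u; split <;> simp
    simp only [this]
    rw [Finset.sum_ite_eq Finset.univ j (fun u => qc p u)]; simp
  simp only [Finset.sum_add_distrib, ← Finset.mul_sum, s1, s2, s5,
    qc_sum_zero p hp, jacobi p hp j, Finset.sum_const, Finset.card_univ,
    ZMod.card, nsmul_eq_mul, mul_one, mul_zero]
  ring

noncomputable def S (m : ℕ) (b : Fin m → ZMod p) (j : ZMod p) : ℚ :=
  ∑ x : Fin m → ZMod p, if (∑ i, b i * x i ^ 2) = j then 1 else 0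

lemma S_split (m : ℕ) (b : Fin (m + 1) → ZMod p) (j : ZMod p) :
    S p (m + 1) b j = ∑ x0 : ZMod p, S p m (b ∘ Fin.succ) (j - b 0 * x0 ^ 2) := by
  unfold S
  rw [← (Fintype.sum_equiv (Fin.consEquiv fun _ : Fin (m + 1) => ZMod p)
      (fun y : ZMod p × (Fin m → ZMod p) =>
        if (∑ i, b i * (Fin.cons y.1 y.2 : Fin (m+1) → ZMod p) i ^ 2) = j then (1:ℚ) else 0)
      (fun x : Fin (m+1) → ZMod p => if (∑ i, b i * x i ^ 2) = j then (1:ℚ) else 0)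
      (fun y => rfl))]
  rw [Fintype.sum_prod_type]
  refine Finset.sum_congr rfl fun x0 _ => Finset.sum_congr rfl fun x _ => ?_
  have hsum : (∑ i, b i * (Fin.cons x0 x : Fin (m+1) → ZMod p) i ^ 2)
      = b 0 * x0 ^ 2 + ∑ i, (b ∘ Fin.succ) i * x i ^ 2 := by
    rw [Fin.sum_univ_succ]
    simp [Fin.cons_zero, Fin.cons_succ]
  rw [hsum]
  congr 1
  rw [eq_iff_iff, eq_sub_iff_add_eq, add_comm]

lemma S_reindex {m m' : ℕ} (h : m = m') (b : Fin m' → ZMod p) (j : ZMod p) :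
    S p m' b j = S p m (b ∘ Fin.cast h) j := by subst h; rfl

lemma main_aux (hp : p ≠ 2) : ∀ (k : ℕ) (b : Fin (2 * k) → ZMod p), (∀ i, b i ≠ 0) → ∀ (j : ZMod p),
    S p (2 * k) b j * p = (p : ℚ) ^ (2 * k)
      + qc p (∏ i, b i) * (qc p (-1)) ^ k
          * ((p : ℚ) * (if j = 0 then 1 else 0) - 1) * (p : ℚ) ^ k := by
  have h0 : (p : ℚ) ≠ 0 := Nat.cast_ne_zero.mpr (Fact.out : p.Prime).ne_zero
  intro k
  induction k with
  | zero =>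
    intro b _ j
    have hqc1 : qc p 1 = 1 := by simp [qc]
    simp only [Nat.mul_zero, pow_zero]
    unfold S
    rw [Fintype.sum_unique]
    simp only [Finset.univ_eq_empty, Finset.sum_empty, Fin.prod_univ_zero, hqc1]
    rcases eq_or_ne j 0 with rfl | hj
    · norm_num [Finset.prod_empty, hqc1]
    · simp only [Finset.prod_empty, hqc1]
      rw [if_neg (show ¬(0:ZMod p) = j from fun h => hj h.symm), if_neg hj]; ring
  | succ k ih =>
    intro b hb j
    have h2 := fun t => ih ((b ∘ Fin.succ) ∘ Fin.succ) (fun i => hb _) t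
    obtain ⟨A, hA2⟩ : ∃ A : ℚ, A * p = (p : ℚ) ^ (2 * k)
        - qc p (∏ i : Fin (2 * k), ((b ∘ Fin.succ) ∘ Fin.succ) i) * (qc p (-1)) ^ k
            * (p : ℚ) ^ k :=
      ⟨((p : ℚ) ^ (2 * k)
        - qc p (∏ i : Fin (2 * k), ((b ∘ Fin.succ) ∘ Fin.succ) i) * (qc p (-1)) ^ k
            * (p : ℚ) ^ k) / p, div_mul_cancel₀ _ h0⟩
    have hS : ∀ t : ZMod p, S p (2 * k) ((b ∘ Fin.succ) ∘ Fin.succ) t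
        = A + 0 * qc p t
          + (qc p (∏ i : Fin (2 * k), ((b ∘ Fin.succ) ∘ Fin.succ) i) * (qc p (-1)) ^ k
              * (p : ℚ) ^ k) * (if t = 0 then 1 else 0) := by
      intro t
      have h3 : (A + 0 * qc p t
          + (qc p (∏ i : Fin (2 * k), ((b ∘ Fin.succ) ∘ Fin.succ) i) * (qc p (-1)) ^ k
              * (p : ℚ) ^ k) * (if t = 0 then 1 else 0)) * p
          = S p (2 * k) ((b ∘ Fin.succ) ∘ Fin.succ) t * p := by
        linear_combination hA2 - h2 t
      exact (mul_right_cancel₀ h0 h3).symm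
    have e2 : ∀ t : ZMod p, S p (2 * k + 1) (b ∘ Fin.succ) t
        = (p : ℚ) ^ (2 * k)
          + (qc p ((b ∘ Fin.succ) 0)
              * (qc p (∏ i : Fin (2 * k), ((b ∘ Fin.succ) ∘ Fin.succ) i) * (qc p (-1)) ^ k
                  * (p : ℚ) ^ k)) * qc p t
          + 0 * (if t = 0 then 1 else 0) := by
      intro t
      rw [S_split p (2 * k) (b ∘ Fin.succ) t,
        Finset.sum_congr rfl (fun x1 _ => hS _),
        step p hp ((b ∘ Fin.succ) 0) (hb _) A 0
          (qc p (∏ i : Fin (2 * k), ((b ∘ Fin.succ) ∘ Fin.succ) i) * (qc p (-1)) ^ k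
            * (p : ℚ) ^ k) t]
      linear_combination hA2
    have e1 : S p (2 * (k + 1)) b j
        = ∑ x0 : ZMod p, S p (2 * k + 1) (b ∘ Fin.succ) (j - b 0 * x0 ^ 2) :=
      S_split p (2 * k + 1) b j
    have hprod : (∏ i : Fin (2 * (k + 1)), b i)
        = b 0 * ((b ∘ Fin.succ) 0 * ∏ i : Fin (2 * k), ((b ∘ Fin.succ) ∘ Fin.succ) i) := by
      rw [show (∏ i : Fin (2 * (k + 1)), b i)
          = b 0 * ∏ i : Fin (2 * k + 1), (b ∘ Fin.succ) i from Fin.prod_univ_succ b,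
        show (∏ i : Fin (2 * k + 1), (b ∘ Fin.succ) i)
          = (b ∘ Fin.succ) 0 * ∏ i : Fin (2 * k), ((b ∘ Fin.succ) ∘ Fin.succ) i from
          Fin.prod_univ_succ (b ∘ Fin.succ)]
    rw [e1, Finset.sum_congr rfl (fun x0 _ => e2 _),
      step p hp (b 0) (hb 0) ((p : ℚ) ^ (2 * k))
        (qc p ((b ∘ Fin.succ) 0)
          * (qc p (∏ i : Fin (2 * k), ((b ∘ Fin.succ) ∘ Fin.succ) i) * (qc p (-1)) ^ k
              * (p : ℚ) ^ k)) 0 j,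
      hprod, qc_mul, qc_mul]
    ring

end Aux

/-- number of elements of norm j/p in the odd p-adic discriminant form
`(ℤ/pℤ)^n` with quadratic form `q(x) = (a₁x₁² + ⋯ + aₙxₙ²)/p`, for `n` even. -/
theorem count_norm_j_odd_prime_even_rank (p : ℕ) [Fact p.Prime] (hp : p ≠ 2)
    (n : ℕ) (hn : Even n) (a : Fin n → ℤ) (ha : ∀ i, ¬ (p : ℤ) ∣ a i) (j : ℤ) :
    ((Finset.univ.filter fun x : Fin n → ZMod p =>
        (∑ i, (a i : ZMod p) * (x i) ^ 2) = (j : ZMod p)).card : ℚ)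
      = (p : ℚ) ^ ((n : ℤ) - 1)
        + (legendreSym p (∏ i, 2 * a i) : ℚ)
          * ((legendreSym p (-1) : ℤ) : ℚ) ^ (n / 2)
          * ((p : ℚ) * (if (p : ℤ) ∣ j then 1 else 0) - 1)
          * (p : ℚ) ^ (((n : ℤ) - 2) / 2) := by
  obtain ⟨k, hk⟩ := hn
  have h0 : (p : ℚ) ≠ 0 := Nat.cast_ne_zero.mpr (Fact.out : p.Prime).ne_zero
  have h2k : 2 * k = n := by omega
  have hcard : ((Finset.univ.filter fun x : Fin n → ZMod p =>
      (∑ i, (a i : ZMod p) * (x i) ^ 2) = (j : ZMod p)).card : ℚ)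
      = S p n (fun i => ((a i : ZMod p))) ((j : ZMod p) : ZMod p) := by
    rw [S, Finset.sum_boole]
  have hb0 : ∀ i : Fin n, ((a i : ZMod p)) ≠ 0 := fun i h =>
    ha i ((ZMod.intCast_zmod_eq_zero_iff_dvd _ p).mp h)
  have key := main_aux p hp k ((fun i : Fin n => ((a i : ZMod p))) ∘ Fin.cast h2k)
    (fun i => hb0 _) ((j : ZMod p))
  rw [← S_reindex p h2k _ _] at key
  have hprod : (∏ i : Fin (2 * k), ((fun i : Fin n => ((a i : ZMod p))) ∘ Fin.cast h2k) i)
      = ∏ i : Fin n, ((a i : ZMod p)) :=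
    Fintype.prod_equiv (finCongr h2k) _ _ (fun i => rfl)
  rw [hprod] at key
  have h2ne : (2 : ZMod p) ≠ 0 := by
    have : ((2 : ℕ) : ZMod p) ≠ 0 := by
      rw [Ne, ZMod.natCast_eq_zero_iff]
      exact fun h => hp ((Nat.prime_dvd_prime_iff_eq (Fact.out : p.Prime) Nat.prime_two).mp h)
    simpa using this
  have hleg1 : ((legendreSym p (∏ i, 2 * a i) : ℤ) : ℚ)
      = qc p (∏ i : Fin n, ((a i : ZMod p))) := by
    show ((quadraticChar (ZMod p) (((∏ i, 2 * a i : ℤ)) : ZMod p) : ℤ) : ℚ) = _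
    have hc : (((∏ i, 2 * a i : ℤ)) : ZMod p) = (2 : ZMod p) ^ n * ∏ i : Fin n, ((a i : ZMod p)) := by
      push_cast
      rw [Finset.prod_mul_distrib]
      simp [Finset.prod_const]
    rw [hc]
    have h2sq : quadraticChar (ZMod p) ((2 : ZMod p) ^ n) = 1 := by
      rw [show (2 : ZMod p) ^ n = ((2 : ZMod p) ^ k) ^ 2 by rw [← pow_mul]; congr 1; omega]
      exact quadraticChar_sq_one' (pow_ne_zero k h2ne)
    rw [map_mul, h2sq, one_mul]
    rfl
  have hleg2 : ((legendreSym p (-1) : ℤ) : ℚ) = qc p (-1) := by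
    show ((quadraticChar (ZMod p) (((-1 : ℤ)) : ZMod p) : ℤ) : ℚ) = _
    norm_num [qc]
  have hdel : (if (p : ℤ) ∣ j then (1:ℚ) else 0) = (if (j : ZMod p) = 0 then 1 else 0) := by
    simp [ZMod.intCast_zmod_eq_zero_iff_dvd]
  have hz1 : (p : ℚ) ^ ((n : ℤ) - 1) = (p : ℚ) ^ (2 * k) / p := by
    rw [show (n : ℤ) - 1 = ((2 * k : ℕ) : ℤ) - 1 by push_cast; omega,
      zpow_sub₀ h0, zpow_natCast, zpow_one]
  have hz2 : (p : ℚ) ^ (((n : ℤ) - 2) / 2) = (p : ℚ) ^ k / p := by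
    rw [show ((n : ℤ) - 2) / 2 = ((k : ℕ) : ℤ) - 1 by omega,
      zpow_sub₀ h0, zpow_natCast, zpow_one]
  have hn2 : n / 2 = k := by omega
  rw [hcard, hleg1, hleg2, hdel, hz1, hz2, hn2]
  have hfin : S p n (fun i => ((a i : ZMod p))) ((j : ZMod p))
      = ((p : ℚ) ^ (2 * k)
        + qc p (∏ i : Fin n, ((a i : ZMod p))) * (qc p (-1)) ^ k
          * ((p : ℚ) * (if (j : ZMod p) = 0 then 1 else 0) - 1) * (p : ℚ) ^ k) / p := by
    rw [eq_div_iff h0]; exact key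
  rw [hfin]
  ring
end

section
/- Let p be an odd prime and let D be the discriminant form (Z/pZ)^n with quadratic form q(x) = (a_1 x_1^2 + ... + a_n x_n^2)/p mod 1 where each a_i is coprime to p, and suppose n is odd. Then the number of elements γ ∈ D with q(γ) = j/p mod 1 equals p^{n-1} + ε (−1|p)^{(n−1)/2} (2|p) (j|p) p^{(n−1)/2}, where ε = ((2a_1···2a_n)|p). -/
/-!
Write `χ` for the quadratic character of a finite field `F` of odd order `q`. Splitting off two
variables at a time expresses the count for `n + 2` variables as a double sum of counts for `n`
variables, so by induction on odd `n` everything reduces to the binary character sum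
`∑ x, ∑ y, χ (j - b x² - c y²) = q χ(-bc) χ(j)`. That sum follows from `#{x | x² = t} = 1 + χ(t)`
and the Jacobi sum `J(χ, χ) = -χ(-1)`. For `F = ℤ/pℤ` the factor `(2|p)` in the statement cancels
against the `n` factors `(2|p)` in `ε`, because `n + 1` is even.
-/

open Finset

variable {F : Type*} [Field F] [Fintype F] [DecidableEq F]

local notation "χ" => quadraticChar F

theorem sum_comp_sq_eq_sum_quadraticChar_add_one_mul (hF : ringChar F ≠ 2) (f : F → ℤ) :
    ∑ x, f (x ^ 2) = ∑ t, (χ t + 1) * f t := by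
  rw [← sum_fiberwise univ (· ^ 2)]
  refine sum_congr rfl fun t _ => ?_
  rw [← quadraticChar_card_sqrts hF t, Set.toFinset_ofPred, ← nsmul_eq_mul, ← sum_const]
  exact sum_congr rfl fun x hx => by rw [(mem_filter.mp hx).2]

theorem card_filter_mul_sq_eq (hF : ringChar F ≠ 2) {b : F} (hb : b ≠ 0) (j : F) :
    (#{x | b * x ^ 2 = j} : ℤ) = 1 + χ (b * j) := by
  have hsqrt : b⁻¹ * j = b⁻¹ ^ 2 * (b * j) := by field_simp
  rw [filter_congr fun x _ => (eq_inv_mul_iff_mul_eq₀ hb).symm, ← Set.toFinset_ofPred,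
    quadraticChar_card_sqrts hF, hsqrt, map_mul, quadraticChar_sq_one' (inv_ne_zero hb), one_mul,
    add_comm]

theorem jacobiSum_quadraticChar_self (hF : ringChar F ≠ 2) : jacobiSum χ χ = -χ (-1) := by
  nth_rw 2 [← (quadraticChar_isQuadratic F).inv]
  exact jacobiSum_nontrivial_inv (quadraticChar_ne_one hF)

theorem quadraticChar_inv (b : F) : χ b⁻¹ = χ b := by
  rw [← MulChar.inv_apply', (quadraticChar_isQuadratic F).inv]

theorem sum_quadraticChar_sq : ∑ t, χ t ^ 2 = Fintype.card F - 1 := by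
  rw [← sum_erase_add _ _ (mem_univ 0), quadraticChar_zero, sum_congr rfl fun t ht =>
    quadraticChar_sq_one (ne_of_mem_erase ht), sum_const, card_erase_of_mem (mem_univ 0), card_univ,
    nsmul_one, Nat.cast_sub Fintype.card_pos]
  ring

theorem sum_quadraticChar_sub_mul (hF : ringChar F ≠ 2) {b : F} (hb : b ≠ 0) (j : F) :
    ∑ t, χ (j - b * t) = 0 := by
  have hbij : Function.Bijective fun t => j - b * t :=
    Finite.injective_iff_bijective.mp <| (sub_right_injective).comp (mul_right_injective₀ hb)
  rw [Fintype.sum_bijective _ hbij _ _ fun _ => rfl, quadraticChar_sum_zero hF]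

theorem sum_quadraticChar_mul_quadraticChar_sub_mul (hF : ringChar F ≠ 2) {b : F} (hb : b ≠ 0)
    (j : F) :
    ∑ t, χ t * χ (j - b * t) = χ (-b) * ((if j = 0 then (Fintype.card F : ℤ) else 0) - 1) := by
  by_cases hj : j = 0
  · have h : ∀ t, χ t * χ (j - b * t) = χ (-b) * χ t ^ 2 := fun t => by
      rw [hj, zero_sub, ← neg_mul, map_mul]; ring
    rw [sum_congr rfl fun t _ => h t, ← mul_sum, sum_quadraticChar_sq, if_pos hj]
  · have hc : b⁻¹ * j ≠ 0 := mul_ne_zero (inv_ne_zero hb) hj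
    have h : ∀ s, χ (b⁻¹ * j * s) * χ (j - b * (b⁻¹ * j * s)) = χ b * (χ s * χ (1 - s)) :=
      fun s => by
        have : j - b * (b⁻¹ * j * s) = j * (1 - s) := by field_simp
        rw [this, map_mul, map_mul, map_mul, quadraticChar_inv]
        linear_combination (χ b * χ s * χ (1 - s)) * quadraticChar_sq_one hj
    rw [← Equiv.sum_comp (Equiv.mulLeft₀ _ hc)]
    simp only [Equiv.mulLeft₀_apply]
    rw [sum_congr rfl fun s _ => h s, ← mul_sum, ← jacobiSum, jacobiSum_quadraticChar_self hF,
      if_neg hj, neg_eq_neg_one_mul b, map_mul]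
    ring

theorem sum_quadraticChar_sub_mul_sq (hF : ringChar F ≠ 2) {b : F} (hb : b ≠ 0) (j : F) :
    ∑ x, χ (j - b * x ^ 2) = χ (-b) * ((if j = 0 then (Fintype.card F : ℤ) else 0) - 1) := by
  rw [sum_comp_sq_eq_sum_quadraticChar_add_one_mul hF fun t => χ (j - b * t)]
  simp only [add_mul, one_mul, sum_add_distrib, sum_quadraticChar_sub_mul hF hb, add_zero]
  exact sum_quadraticChar_mul_quadraticChar_sub_mul hF hb j

theorem sum_sum_quadraticChar_sub_mul_sq_sub_mul_sq (hF : ringChar F ≠ 2) {b c : F} (hb : b ≠ 0)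
    (hc : c ≠ 0) (j : F) :
    ∑ x, ∑ y, χ (j - b * x ^ 2 - c * y ^ 2) = Fintype.card F * χ (-(b * c)) * χ j := by
  simp only [sum_quadraticChar_sub_mul_sq hF hc, ← mul_sum, sum_sub_distrib, sub_eq_zero,
    eq_comm (a := j), ← sum_filter]
  rw [sum_const, nsmul_eq_mul, card_filter_mul_sq_eq hF hb, sum_const, card_univ, nsmul_one,
    neg_mul_eq_mul_neg, map_mul, map_mul]
  ring

def repCount {n : ℕ} (a : Fin n → F) (j : F) : ℕ :=
  #{x : Fin n → F | ∑ i, a i * x i ^ 2 = j}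

theorem repCount_succ {n : ℕ} (a : Fin (n + 1) → F) (j : F) :
    repCount a j = ∑ c, repCount (Fin.tail a) (j - a 0 * c ^ 2) := by
  rw [repCount, card_filter, ← (Fin.consEquiv fun _ => F).sum_comp, Fintype.sum_prod_type]
  refine sum_congr rfl fun c _ => ?_
  rw [repCount, card_filter]
  refine sum_congr rfl fun y _ => if_congr ?_ rfl rfl
  simp only [Fin.consEquiv_apply, Fin.sum_univ_succ, Fin.cons_zero, Fin.cons_succ, Fin.tail]
  constructor <;> intro h <;> linear_combination h

theorem repCount_add_two {n : ℕ} (a : Fin (n + 2) → F) (j : F) :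
    repCount a j = ∑ x, ∑ y, repCount (Fin.tail (Fin.tail a)) (j - a 0 * x ^ 2 - a 1 * y ^ 2) := by
  simp only [repCount_succ a, repCount_succ (Fin.tail a)]
  rfl

theorem repCount_of_odd (hF : ringChar F ≠ 2) {n : ℕ} (hn : Odd n) (a : Fin n → F)
    (ha : ∀ i, a i ≠ 0) (j : F) :
    (repCount a j : ℤ) = (Fintype.card F : ℤ) ^ (n - 1)
      + χ (-1) ^ ((n - 1) / 2) * (∏ i, χ (a i)) * χ j * (Fintype.card F : ℤ) ^ ((n - 1) / 2) := by
  induction n using Nat.twoStepInduction generalizing j with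
  | zero => exact absurd hn Nat.not_odd_zero
  | one =>
    have h1 : repCount a j = #{c | a 0 * c ^ 2 = j} :=
      card_equiv (Equiv.funUnique (Fin 1) F) fun x => by simp
    simp [h1, card_filter_mul_sq_eq hF (ha 0), map_mul]
  | more n ih _ =>
    have hn' : Odd n := (Nat.odd_add.mp hn).mpr even_two
    have hexp : n + 1 = n - 1 + 2 := by have := hn'.pos; omega
    have hexp' : (n - 1 + 2) / 2 = (n - 1) / 2 + 1 := by omega
    have hneg : χ (-(a 0 * a 1)) = χ (-1) * χ (a 0) * χ (a 1) := by
      rw [neg_eq_neg_one_mul, map_mul, map_mul, mul_assoc]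
    rw [repCount_add_two]
    push_cast
    simp only [ih hn' (Fin.tail (Fin.tail a)) (fun i => ha _), sum_add_distrib, ← sum_mul,
      ← mul_sum, sum_sum_quadraticChar_sub_mul_sq_sub_mul_sq hF (ha 0) (ha 1), sum_const,
      card_univ, hexp, hexp']
    rw [Fin.prod_univ_succ, Fin.prod_univ_succ, Fin.succ_zero_eq_one, hneg]
    simp only [Fin.tail_def, nsmul_eq_mul]
    ring

/-- number of elements of norm j/p in the odd p-adic discriminant form
`(ℤ/pℤ)^n` with quadratic form `q(x) = (a₁x₁² + ⋯ + aₙxₙ²)/p`, for `n` odd. -/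
theorem count_norm_j_odd_prime_odd_rank (p : ℕ) [Fact p.Prime] (hp : p ≠ 2)
    (n : ℕ) (hn : Odd n) (a : Fin n → ℤ) (ha : ∀ i, ¬ (p : ℤ) ∣ a i) (j : ℤ) :
    ((Finset.univ.filter fun x : Fin n → ZMod p =>
        (∑ i, (a i : ZMod p) * (x i) ^ 2) = (j : ZMod p)).card : ℤ)
      = (p : ℤ) ^ (n - 1)
        + legendreSym p (∏ i, 2 * a i)
          * (legendreSym p (-1)) ^ ((n - 1) / 2)
          * legendreSym p 2 * legendreSym p j
          * (p : ℤ) ^ ((n - 1) / 2) := by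
  have hF : ringChar (ZMod p) ≠ 2 := by rwa [ZMod.ringChar_zmod_n]
  have ha' : ∀ i, (a i : ZMod p) ≠ 0 := fun i =>
    (ZMod.intCast_zmod_eq_zero_iff_dvd _ _).not.mpr (ha i)
  have h2 : legendreSym p 2 ^ (n + 1) = 1 := by
    rw [← Nat.two_mul_div_two_of_even hn.add_one, pow_mul,
      legendreSym.sq_one p (by exact_mod_cast Ring.two_ne_zero hF), one_pow]
  have hprod : legendreSym p (∏ i, 2 * a i) * legendreSym p 2
      = ∏ i, quadraticChar (ZMod p) (a i : ZMod p) := by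
    rw [← legendreSym.hom_apply, map_prod]
    simp only [legendreSym.hom_apply, legendreSym.mul, prod_mul_distrib, prod_const, card_univ,
      Fintype.card_fin, mul_right_comm, ← pow_succ, h2, one_mul]
    rfl
  have key := repCount_of_odd hF hn _ ha' j
  rw [ZMod.card, ← hprod] at key
  refine key.trans ?_
  simp only [legendreSym, Int.cast_neg, Int.cast_one]
  ring
end

section
/- The number of elements of norm j/2 mod 1 in the discriminant form 2_{II}^{ε n} (an orthogonal sum of n/2 hyperbolic or anti-hyperbolic planes over Z/2Z, n even) is 2^{n−1} + ε(−1)^j 2^{(n−2)/2}. -/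
/-!
Count with the sign character `χ a = (-1) ^ a` of `ZMod 2`: for any `f : X → ZMod 2`,
`2 * #{f = c} = #X + χ c * ∑ x, χ (f x)`. For an orthogonal sum of planes the character sum
factors into the plane sums, which are `2` for `xy` and `-2` for `x² + xy + y²`; hence it is
`2 ^ m * ε`, and the count is `(4 ^ m + (-1) ^ j * ε * 2 ^ m) / 2`.
-/

open Finset

lemma ZMod.sum_univ_two {M : Type*} [AddCommMonoid M] (f : ZMod 2 → M) :
    ∑ x, f x = f 0 + f 1 :=
  Fin.sum_univ_two f

namespace AddChar

variable {ι A M : Type*} [AddCommMonoid A] [CommMonoid M]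

lemma map_sum_eq_prod (ψ : AddChar A M) (s : Finset ι) (f : ι → A) :
    ψ (∑ i ∈ s, f i) = ∏ i ∈ s, ψ (f i) :=
  map_prod ψ.toMonoidHom (fun i => Multiplicative.ofAdd (f i)) s

lemma sum_pi_map_sum_eq_prod_sum {R : Type*} [CommSemiring R] [Fintype ι] [DecidableEq ι]
    {κ : ι → Type*} [∀ i, Fintype (κ i)] (ψ : AddChar A R) (q : ∀ i, κ i → A) :
    ∑ x : ∀ i, κ i, ψ (∑ i, q i (x i)) = ∏ i, ∑ y, ψ (q i y) := by
  simp_rw [map_sum_eq_prod]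
  exact (Fintype.prod_sum fun i y => ψ (q i y)).symm

end AddChar

section SignChar

variable (R : Type*) [CommRing R]

def signChar : AddChar (ZMod 2) R := AddChar.zmodChar 2 neg_one_sq

variable {R}

lemma signChar_one : signChar R 1 = -1 := pow_one _

lemma signChar_intCast {K : Type*} [Field K] (j : ℤ) : signChar K j = (-1 : K) ^ j := by
  rw [← zsmul_one, AddChar.map_zsmul_eq_zpow, signChar_one]

lemma two_mul_ite_eq_one_add_signChar_mul (a c : ZMod 2) :
    2 * (if a = c then 1 else 0 : R) = 1 + signChar R c * signChar R a := by
  obtain rfl | rfl : a = 0 ∨ a = 1 := by decide +revert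
  all_goals obtain rfl | rfl : c = 0 ∨ c = 1 := by decide +revert
  all_goals norm_num [signChar_one]

lemma two_mul_card_filter_eq {X : Type*} [Fintype X] (f : X → ZMod 2) (c : ZMod 2) :
    2 * (#{x | f x = c} : R) = Fintype.card X + signChar R c * ∑ x, signChar R (f x) := by
  rw [card_filter, Nat.cast_sum, mul_sum, mul_sum]
  simp_rw [Nat.cast_ite, Nat.cast_one, Nat.cast_zero, two_mul_ite_eq_one_add_signChar_mul,
    sum_add_distrib]
  simp

lemma sum_signChar_mul : ∑ y : ZMod 2 × ZMod 2, signChar R (y.1 * y.2) = 2 := by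
  simp [Fintype.sum_prod_type, ZMod.sum_univ_two, signChar_one]
  ring

lemma sum_signChar_anisotropic :
    ∑ y : ZMod 2 × ZMod 2, signChar R (y.1 ^ 2 + y.1 * y.2 + y.2 ^ 2) = -2 := by
  simp [Fintype.sum_prod_type, ZMod.sum_univ_two, signChar_one]
  rw [show (1 + 1 + 1 : ZMod 2) = 1 from rfl, signChar_one]
  ring

lemma sum_signChar_plane {a : ℤ} (ha : a = 1 ∨ a = -1) :
    ∑ y : ZMod 2 × ZMod 2,
      signChar R (if a = 1 then y.1 * y.2 else y.1 ^ 2 + y.1 * y.2 + y.2 ^ 2) = 2 * a := by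
  rcases ha with rfl | rfl
  · rw [Int.cast_one, mul_one]
    simpa only [if_pos] using sum_signChar_mul
  · rw [Int.cast_neg, Int.cast_one, mul_neg_one]
    simpa only [show (-1 : ℤ) ≠ 1 by decide, if_false] using sum_signChar_anisotropic

end SignChar

/-- the number of elements of norm j/2 in the even 2-adic discriminant
form `2_{II}^{εn}` (orthogonal sum of `m = n/2` hyperbolic (`s i = 1`) or
anti-hyperbolic (`s i = -1`) planes over `ℤ/2ℤ`, `ε = ∏ s i`) is
`2^(n-1) + ε (-1)^j 2^((n-2)/2)`. -/
theorem count_norm_j_even_two_adic (m : ℕ) (s : Fin m → ℤ)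
    (hs : ∀ i, s i = 1 ∨ s i = -1) (j : ℤ) :
    ((Finset.univ.filter fun x : Fin m → ZMod 2 × ZMod 2 =>
        (∑ i, (if s i = 1 then (x i).1 * (x i).2
               else (x i).1 ^ 2 + (x i).1 * (x i).2 + (x i).2 ^ 2)) = (j : ZMod 2)).card : ℚ)
      = (2 : ℚ) ^ ((2 * m : ℤ) - 1)
        + ((∏ i, s i : ℤ) : ℚ) * (-1 : ℚ) ^ j * (2 : ℚ) ^ (((2 * m : ℤ) - 2) / 2) := by
  have hcount := two_mul_card_filter_eq (R := ℚ) (fun x : Fin m → ZMod 2 × ZMod 2 =>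
    ∑ i, (if s i = 1 then (x i).1 * (x i).2 else (x i).1 ^ 2 + (x i).1 * (x i).2 + (x i).2 ^ 2))
    (j : ZMod 2)
  rw [AddChar.sum_pi_map_sum_eq_prod_sum (κ := fun _ => ZMod 2 × ZMod 2) _
    (fun i y => if s i = 1 then y.1 * y.2 else y.1 ^ 2 + y.1 * y.2 + y.2 ^ 2)] at hcount
  simp only [sum_signChar_plane (hs _), signChar_intCast, prod_mul_distrib, prod_const,
    card_univ, Fintype.card_pi, Fintype.card_prod, ZMod.card, Fintype.card_fin] at hcount
  have hexp₁ : (2 : ℚ) ^ ((2 * m : ℤ) - 1) = 2 ^ m * 2 ^ m / 2 := by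
    rw [zpow_sub₀ two_ne_zero, zpow_one, two_mul, zpow_add₀ two_ne_zero, zpow_natCast]
  have hexp₂ : (2 : ℚ) ^ (((2 * m : ℤ) - 2) / 2) = 2 ^ m / 2 := by
    rw [show ((2 * m : ℤ) - 2) / 2 = m - 1 by omega, zpow_sub₀ two_ne_zero, zpow_natCast,
      zpow_one]
  rw [hexp₁, hexp₂]
  push_cast at hcount ⊢
  linear_combination hcount / 2
end

section
/- Let D be a discriminant form of even signature and let γ ∈ D be orthogonal to every isotropic element of D (i.e. (γ,β) = 0 mod 1 for all β with q(β) = 0). Then every SL_2(Z)-invariant vector v = Σ_β v_β e^β of the Weil representation satisfies v_γ = v_0. -/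
open scoped Classical

/-- `e(x) = exp(2πix)`; it only depends on `x` modulo 1. -/
noncomputable def e (x : ℚ) : ℂ := Complex.exp (2 * Real.pi * Complex.I * (x : ℂ))

/-- A discriminant form structure on a finite abelian group `D`: a function
`q : D → ℚ` representing a quadratic form `D → ℚ/ℤ` (all identities hold modulo 1)
whose associated bilinear form `b(β,γ) = q(β+γ) - q(β) - q(γ) mod 1` is
nondegenerate. -/
structure IsDiscForm (D : Type*) [AddCommGroup D] [Fintype D] (q : D → ℚ) : Prop where
  quad : ∀ (n : ℤ) (γ : D), ∃ k : ℤ, q (n • γ) - (n : ℚ) ^ 2 * q γ = (k : ℚ)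
  bilin : ∀ α β γ : D, ∃ k : ℤ,
    (q (α + β + γ) - q (α + β) - q γ) - (q (α + γ) - q α - q γ)
      - (q (β + γ) - q β - q γ) = (k : ℚ)
  nondeg : ∀ γ : D, (∀ β : D, ∃ k : ℤ, q (γ + β) - q γ - q β = (k : ℚ)) → γ = 0

lemma e_int (k : ℤ) : e (k : ℚ) = 1 := by
  unfold e
  push_cast
  rw [show 2 * (Real.pi : ℂ) * Complex.I * (k : ℂ)
      = (k : ℂ) * (2 * Real.pi * Complex.I) by ring]
  exact Complex.exp_int_mul_two_pi_mul_I k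

lemma e_one_of_int {x : ℚ} (h : ∃ k : ℤ, x = (k : ℚ)) : e x = 1 := by
  obtain ⟨k, rfl⟩ := h; exact e_int k

lemma int_of_e_one {x : ℚ} (h : e x = 1) : ∃ k : ℤ, x = (k : ℚ) := by
  unfold e at h
  rw [Complex.exp_eq_one_iff] at h
  obtain ⟨n, hn⟩ := h
  refine ⟨n, ?_⟩
  rw [show (n : ℂ) * (2 * Real.pi * Complex.I)
      = 2 * Real.pi * Complex.I * (n : ℂ) by ring] at hn
  have hx : (x : ℂ) = (n : ℂ) := mul_left_cancel₀ Complex.two_pi_I_ne_zero hn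
  exact_mod_cast hx

/-- if `γ` is orthogonal to every isotropic element of a discriminant
form `D` of even signature, then every Weil-representation invariant `v` satisfies
`v_γ = v_0`. -/
theorem weil_invariant_perp_isotropic
    (D : Type) [AddCommGroup D] [Fintype D] (q : D → ℚ) (hD : IsDiscForm D q)
    (σ : ℂ)
    (hMilgram : ∑ γ : D, e (q γ) = (Real.sqrt (Fintype.card D) : ℂ) * σ)
    (hEvenSig : σ ^ 4 = 1)
    (v : D → ℂ)
    (hT : ∀ γ : D, e (-(q γ)) * v γ = v γ)
    (hS : ∀ γ : D, (σ / (Real.sqrt (Fintype.card D) : ℂ)) *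
        ∑ β : D, e (q (γ + β) - q γ - q β) * v β = v γ)
    (γ : D)
    (hperp : ∀ β : D, (∃ k : ℤ, q β = (k : ℚ)) →
      ∃ k : ℤ, q (γ + β) - q γ - q β = (k : ℚ)) :
    v γ = v 0 := by
  have hq0 : ∃ k : ℤ, q 0 = (k : ℚ) := by
    obtain ⟨k, hk⟩ := hD.quad 0 0
    simp only [zero_smul, Int.cast_zero] at hk
    exact ⟨k, by linarith⟩
  have hsupp : ∀ β : D, v β ≠ 0 → ∃ k : ℤ, q β = (k : ℚ) := by
    intro β hv
    have h := hT β
    have h2 : (e (-(q β)) - 1) * v β = 0 := by ring_nf; linear_combination h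
    rcases mul_eq_zero.mp h2 with h3 | h3
    · obtain ⟨k, hk⟩ := int_of_e_one (sub_eq_zero.mp h3)
      exact ⟨-k, by push_cast; linarith⟩
    · exact absurd h3 hv
  have hsum : ∀ δ : D, (∀ β : D, (∃ k : ℤ, q β = (k : ℚ)) →
      ∃ k : ℤ, q (δ + β) - q δ - q β = (k : ℚ)) →
      v δ = (σ / (Real.sqrt (Fintype.card D) : ℂ)) * ∑ β : D, v β := by
    intro δ hδ
    rw [← hS δ]
    congr 1
    apply Finset.sum_congr rfl
    intro β _
    by_cases hv : v β = 0
    · simp [hv]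
    · rw [e_one_of_int (hδ β (hsupp β hv)), one_mul]
  have h0 : ∀ β : D, (∃ k : ℤ, q β = (k : ℚ)) →
      ∃ k : ℤ, q (0 + β) - q 0 - q β = (k : ℚ) := by
    intro β _
    obtain ⟨k, hk⟩ := hq0
    exact ⟨-k, by rw [zero_add]; push_cast; linarith⟩
  rw [hsum γ hperp, hsum 0 h0]
end

section
/- Let D be a discriminant form of type p^{ε2} with p an odd prime and ε = (−1|p). Then the space of SL_2(Z)-invariants of the Weil representation on C[D] is 2-dimensional, and it is spanned by the characteristic functions Σ_{μ ∈ H_1} e^μ and Σ_{μ ∈ H_2} e^μ of the two maximal isotropic subgroups H_1, H_2 of D. -/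
open scoped Classical

/-- The action of `T` in the Weil representation on `ℂ[D]`. -/
noncomputable def rhoT (D : Type) [AddCommGroup D] [Fintype D] (q : D → ℚ) :
    (D → ℂ) →ₗ[ℂ] (D → ℂ) :=
  LinearMap.pi fun γ => e (-(q γ)) • LinearMap.proj γ

/-- The action of `S` in the Weil representation on `ℂ[D]`, where `σ = e(sign(D)/8)`. -/
noncomputable def rhoS (D : Type) [AddCommGroup D] [Fintype D] (q : D → ℚ) (σ : ℂ) :
    (D → ℂ) →ₗ[ℂ] (D → ℂ) :=
  LinearMap.pi fun γ =>
    ∑ β : D, ((σ / (Real.sqrt (Fintype.card D) : ℂ)) * e (q (γ + β) - q γ - q β)) •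
      LinearMap.proj β

/-- The subspace of `SL₂(ℤ)`-invariants of the Weil representation, i.e. the vectors
fixed by the generators `S` and `T` of `SL₂(ℤ)`. -/
noncomputable def weilInvariants (D : Type) [AddCommGroup D] [Fintype D]
    (q : D → ℚ) (σ : ℂ) : Submodule ℂ (D → ℂ) :=
  LinearMap.ker (rhoT D q - LinearMap.id) ⊓ LinearMap.ker (rhoS D q σ - LinearMap.id)

/-!
The Gauss sum of `q(x, y) = xy/p` is `p = √|D|`, so `σ = 1`. `T`-invariance forces an invariant
`f` to vanish off the axes `xy = 0`, and for such `f` the `S`-equation at `(x, y)` reads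
`p f(x, y) = u(y) + v(x)`, with `u`, `v` the Fourier transforms of `f` along the two axes.
Off the axes the left side vanishes, so `v` is constant on `x ≠ 0`; hence `f` is constant on the
punctured first axis, and by the isometry `(x, y) ↦ (y, x)` on the second one. An invariant
vanishing at `(1, 0)` and `(0, 1)` is then supported at `0`, and the `S`-equation at `(1, 1)`
kills it. The indicators of the two axes are invariant by orthogonality of characters.
-/

open Finset ZMod

section WeilRepresentation

variable {D : Type} [AddCommGroup D] [Fintype D]

lemma rhoT_apply (q : D → ℚ) (f : D → ℂ) (γ : D) : rhoT D q f γ = e (-q γ) * f γ := rfl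

lemma rhoS_apply (q : D → ℚ) (σ : ℂ) (f : D → ℂ) (γ : D) :
    rhoS D q σ f γ =
      ∑ β, σ / (√(Fintype.card D) : ℂ) * e (q (γ + β) - q γ - q β) * f β := by
  simp [rhoS]

lemma mem_weilInvariants_iff {q : D → ℚ} {σ : ℂ} {f : D → ℂ} :
    f ∈ weilInvariants D q σ ↔
      (∀ γ, e (-q γ) * f γ = f γ) ∧
        ∀ γ, ∑ β, σ / (√(Fintype.card D) : ℂ) * e (q (γ + β) - q γ - q β) * f β = f γ := by
  simp only [weilInvariants, Submodule.mem_inf, LinearMap.mem_ker, funext_iff, LinearMap.sub_apply,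
    LinearMap.id_apply, sub_eq_zero, rhoT_apply, rhoS_apply]

lemma comp_mem_weilInvariants {q : D → ℚ} {σ : ℂ} {f : D → ℂ} (φ : D ≃+ D)
    (hφ : ∀ γ, q (φ γ) = q γ) (hf : f ∈ weilInvariants D q σ) :
    f ∘ φ ∈ weilInvariants D q σ := by
  rw [mem_weilInvariants_iff] at hf ⊢
  refine ⟨fun γ => by simpa [hφ] using hf.1 (φ γ), fun γ => ?_⟩
  rw [Function.comp_apply, ← hf.2 (φ γ),
    ← φ.toEquiv.sum_comp fun β => _ * e (q (φ γ + β) - q (φ γ) - q β) * f β]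
  simp only [AddEquiv.toEquiv_eq_coe, EquivLike.coe_coe, ← map_add, hφ, Function.comp_apply]

end WeilRepresentation

lemma Fintype.sum_prod_eq_of_eq_zero_off_axes {R M : Type*} [Fintype R] [DecidableEq R] [Zero R]
    [AddCommGroup M] {g : R × R → M} (hg : ∀ x y, x ≠ 0 → y ≠ 0 → g (x, y) = 0) :
    ∑ z, g z = ∑ x, g (x, 0) + ∑ y, g (0, y) - g (0, 0) := by
  have hrow : ∀ x ≠ 0, ∑ y, g (x, y) = g (x, 0) := fun x hx =>
    Fintype.sum_eq_single 0 fun y hy => hg x y hx hy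
  rw [Fintype.sum_prod_type, ← add_sum_erase _ _ (mem_univ 0),
    Finset.sum_congr rfl fun x hx => hrow x (ne_of_mem_erase hx),
    sum_erase_eq_sub (mem_univ 0)]
  abel

lemma apply_fst_eq_of_mul_apply_eq {R K : Type*} [Zero R] [One R] [NeZero (1 : R)] [Field K]
    {f : R × R → K} {u v : R → K} {k : K} (hk : k ≠ 0)
    (hf : ∀ x y, x ≠ 0 → y ≠ 0 → f (x, y) = 0) (huv : ∀ x y, k * f (x, y) = u y + v x)
    {x : R} (hx : x ≠ 0) : f (x, 0) = f (1, 0) := by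
  have hv : v x = v 1 := by
    have hx1 := huv x 1
    have h11 := huv 1 1
    rw [hf x 1 hx one_ne_zero] at hx1
    rw [hf 1 1 one_ne_zero one_ne_zero] at h11
    linear_combination h11 - hx1
  exact mul_left_cancel₀ hk (by rw [huv, huv, hv])

def hyperbolicPlaneForm (N : ℕ) (x : ZMod N × ZMod N) : ℚ := ((x.1.val * x.2.val : ℕ) : ℚ) / N

section HyperbolicPlane

variable {N : ℕ} [NeZero N]

lemma e_intCast_div (n : ℤ) : e (n / N) = stdAddChar (n : ZMod N) := by
  rw [stdAddChar_coe, e]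
  push_cast
  ring_nf

lemma e_hyperbolicPlaneForm (γ : ZMod N × ZMod N) :
    e (hyperbolicPlaneForm N γ) = stdAddChar (γ.1 * γ.2) := by
  have := e_intCast_div (N := N) (γ.1.val * γ.2.val)
  push_cast [natCast_zmod_val] at this
  rw [hyperbolicPlaneForm]
  push_cast
  exact this

lemma e_neg_hyperbolicPlaneForm (γ : ZMod N × ZMod N) :
    e (-hyperbolicPlaneForm N γ) = stdAddChar (-(γ.1 * γ.2)) := by
  have := e_intCast_div (N := N) (-(γ.1.val * γ.2.val))
  push_cast [natCast_zmod_val] at this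
  rw [hyperbolicPlaneForm, ← this]
  push_cast
  ring_nf

lemma e_hyperbolicPlaneForm_polar (γ β : ZMod N × ZMod N) :
    e (hyperbolicPlaneForm N (γ + β) - hyperbolicPlaneForm N γ - hyperbolicPlaneForm N β) =
      stdAddChar (γ.1 * β.2 + γ.2 * β.1) := by
  have := e_intCast_div (N := N)
    ((γ.1 + β.1).val * (γ.2 + β.2).val - γ.1.val * γ.2.val - β.1.val * β.2.val)
  push_cast [natCast_zmod_val] at this
  simp only [hyperbolicPlaneForm, Prod.fst_add, Prod.snd_add]
  convert this using 2
  · push_cast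
    ring
  · ring

lemma hyperbolicPlaneForm_swap (x : ZMod N × ZMod N) :
    hyperbolicPlaneForm N x.swap = hyperbolicPlaneForm N x := by
  simp [hyperbolicPlaneForm, mul_comm]

lemma sum_stdAddChar_fst_mul_snd : ∑ γ : ZMod N × ZMod N, stdAddChar (γ.1 * γ.2) = (N : ℂ) := by
  simp [Fintype.sum_prod_type_right, AddChar.sum_mulShift _ (isPrimitive_stdAddChar N)]

lemma sqrt_card_prod : (√(Fintype.card (ZMod N × ZMod N)) : ℂ) = N := by
  simp [Fintype.card_prod, ZMod.card]

lemma stdAddChar_eq_one_iff {x : ZMod N} : stdAddChar x = (1 : ℂ) ↔ x = 0 := by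
  rw [← AddChar.map_zero_eq_one (stdAddChar (N := N)), injective_stdAddChar.eq_iff]

lemma mem_weilInvariants_hyperbolicPlane_iff {f : ZMod N × ZMod N → ℂ} :
    f ∈ weilInvariants (ZMod N × ZMod N) (hyperbolicPlaneForm N) 1 ↔
      (∀ γ : ZMod N × ZMod N, γ.1 * γ.2 ≠ 0 → f γ = 0) ∧
        ∀ γ : ZMod N × ZMod N, ∑ β, stdAddChar (γ.1 * β.2 + γ.2 * β.1) * f β = N * f γ := by
  have hN : (N : ℂ) ≠ 0 := NeZero.ne _
  simp only [mem_weilInvariants_iff, e_neg_hyperbolicPlaneForm, e_hyperbolicPlaneForm_polar,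
    sqrt_card_prod, mul_assoc, ← mul_sum]
  refine and_congr (forall_congr' fun γ => ?_) (forall_congr' fun γ => ?_)
  · by_cases hf : f γ = 0
    · simp [hf]
    · rw [mul_eq_right₀ hf, stdAddChar_eq_one_iff, neg_eq_zero]
      tauto
  · rw [one_div_mul_eq_div, div_eq_iff hN, mul_comm]

lemma indicator_snd_eq_zero_mem_weilInvariants :
    (fun x : ZMod N × ZMod N => if x.2 = 0 then (1 : ℂ) else 0) ∈
      weilInvariants (ZMod N × ZMod N) (hyperbolicPlaneForm N) 1 := by
  refine mem_weilInvariants_hyperbolicPlane_iff.2 ⟨fun γ hγ => ?_, fun γ => ?_⟩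
  · simp [right_ne_zero_of_mul hγ]
  · simp [Fintype.sum_prod_type, mul_comm γ.2, AddChar.sum_mulShift _ (isPrimitive_stdAddChar N)]

lemma indicator_fst_eq_zero_mem_weilInvariants :
    (fun x : ZMod N × ZMod N => if x.1 = 0 then (1 : ℂ) else 0) ∈
      weilInvariants (ZMod N × ZMod N) (hyperbolicPlaneForm N) 1 := by
  have := comp_mem_weilInvariants (AddEquiv.prodComm (M := ZMod N)) hyperbolicPlaneForm_swap
    indicator_snd_eq_zero_mem_weilInvariants
  exact this

end HyperbolicPlane

section Prime

variable {p : ℕ} [Fact p.Prime] {f : ZMod p × ZMod p → ℂ}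

lemma mul_apply_eq_of_mem_weilInvariants_hyperbolicPlane
    (hf : f ∈ weilInvariants (ZMod p × ZMod p) (hyperbolicPlaneForm p) 1) (x y : ZMod p) :
    p * f (x, y) =
      ∑ t, stdAddChar (y * t) * f (t, 0) + (∑ s, stdAddChar (x * s) * f (0, s) - f (0, 0)) := by
  obtain ⟨hsupp, hS⟩ := mem_weilInvariants_hyperbolicPlane_iff.1 hf
  rw [← hS (x, y), Fintype.sum_prod_eq_of_eq_zero_off_axes fun a b ha hb => by
    rw [hsupp (a, b) (mul_ne_zero ha hb), mul_zero]]
  simp only [mul_zero, add_zero, zero_add, AddChar.map_zero_eq_one, one_mul]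
  abel

lemma apply_fst_eq_of_mem_weilInvariants_hyperbolicPlane
    (hf : f ∈ weilInvariants (ZMod p × ZMod p) (hyperbolicPlaneForm p) 1) {x : ZMod p}
    (hx : x ≠ 0) : f (x, 0) = f (1, 0) :=
  apply_fst_eq_of_mul_apply_eq (NeZero.ne (p : ℂ))
    (fun a b ha hb => (mem_weilInvariants_hyperbolicPlane_iff.1 hf).1 (a, b) (mul_ne_zero ha hb))
    (mul_apply_eq_of_mem_weilInvariants_hyperbolicPlane hf) hx

lemma eq_zero_of_mem_weilInvariants_hyperbolicPlane
    (hf : f ∈ weilInvariants (ZMod p × ZMod p) (hyperbolicPlaneForm p) 1)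
    (h₁₀ : f (1, 0) = 0) (h₀₁ : f (0, 1) = 0) : f = 0 := by
  obtain ⟨hsupp, hS⟩ := mem_weilInvariants_hyperbolicPlane_iff.1 hf
  have hfst : ∀ x ≠ 0, f (x, 0) = 0 := fun x hx =>
    (apply_fst_eq_of_mem_weilInvariants_hyperbolicPlane hf hx).trans h₁₀
  have hsnd : ∀ y ≠ 0, f (0, y) = 0 := fun y hy =>
    (apply_fst_eq_of_mem_weilInvariants_hyperbolicPlane
      (comp_mem_weilInvariants (AddEquiv.prodComm (M := ZMod p)) hyperbolicPlaneForm_swap hf)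
      hy).trans h₀₁
  have hoff : ∀ γ ≠ 0, f γ = 0 := by
    rintro ⟨x, y⟩ hγ
    by_cases hx : x = 0 <;> by_cases hy : y = 0
    · simp_all
    · exact hx ▸ hsnd y hy
    · exact hy ▸ hfst x hx
    · exact hsupp _ (mul_ne_zero hx hy)
  have h₀ : f 0 = 0 := by
    have h₁₁ := hS (1, 1)
    rw [Fintype.sum_eq_single 0 fun β hβ => by rw [hoff β hβ, mul_zero],
      hoff (1, 1) (by simp)] at h₁₁
    simpa using h₁₁
  funext γ
  by_cases hγ : γ = 0
  · rw [hγ, h₀, Pi.zero_apply]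
  · exact hoff γ hγ

lemma weilInvariants_hyperbolicPlane_eq_span :
    weilInvariants (ZMod p × ZMod p) (hyperbolicPlaneForm p) 1 =
      Submodule.span ℂ {(fun x : ZMod p × ZMod p => if x.2 = 0 then (1 : ℂ) else 0),
        (fun x : ZMod p × ZMod p => if x.1 = 0 then (1 : ℂ) else 0)} := by
  refine le_antisymm (fun f hf => Submodule.mem_span_pair.2 ⟨f (1, 0), f (0, 1), ?_⟩)
    (Submodule.span_le.2 ?_)
  · have hmem := sub_mem hf <| add_mem
      (Submodule.smul_mem _ (f (1, 0)) indicator_snd_eq_zero_mem_weilInvariants)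
      (Submodule.smul_mem _ (f (0, 1)) indicator_fst_eq_zero_mem_weilInvariants)
    exact (sub_eq_zero.1 <|
      eq_zero_of_mem_weilInvariants_hyperbolicPlane hmem (by simp) (by simp)).symm
  · rintro _ (rfl | rfl)
    exacts [indicator_snd_eq_zero_mem_weilInvariants, indicator_fst_eq_zero_mem_weilInvariants]

lemma finrank_span_indicator_axes :
    Module.finrank ℂ (Submodule.span ℂ
      {(fun x : ZMod p × ZMod p => if x.2 = 0 then (1 : ℂ) else 0),
        (fun x : ZMod p × ZMod p => if x.1 = 0 then (1 : ℂ) else 0)}) = 2 := by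
  rw [← Matrix.range_cons_cons_empty _ _ ![], finrank_span_eq_card, Fintype.card_fin]
  exact LinearIndependent.pair_iff.2 fun s t hst =>
    ⟨by simpa using congr_fun hst (1, 0), by simpa using congr_fun hst (0, 1)⟩

end Prime

theorem weil_invariants_hyperbolic_plane_general
    (p : ℕ) [Fact p.Prime]
    (q : (ZMod p × ZMod p) → ℚ)
    (hq : ∀ x : ZMod p × ZMod p, q x = ((x.1.val * x.2.val : ℕ) : ℚ) / (p : ℚ))
    (σ : ℂ)
    (hMilgram : ∑ γ : ZMod p × ZMod p, e (q γ)
      = (Real.sqrt (Fintype.card (ZMod p × ZMod p)) : ℂ) * σ) :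
    weilInvariants (ZMod p × ZMod p) q σ
      = Submodule.span ℂ
          {(fun x : ZMod p × ZMod p => if x.2 = 0 then (1 : ℂ) else 0),
           (fun x : ZMod p × ZMod p => if x.1 = 0 then (1 : ℂ) else 0)}
    ∧ Module.finrank ℂ ↥(weilInvariants (ZMod p × ZMod p) q σ) = 2 := by
  obtain rfl : q = hyperbolicPlaneForm p := funext hq
  obtain rfl : σ = 1 := by
    simp only [e_hyperbolicPlaneForm, sum_stdAddChar_fst_mul_snd, sqrt_card_prod] at hMilgram
    exact (mul_eq_left₀ (NeZero.ne (p : ℂ))).1 hMilgram.symm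
  rw [weilInvariants_hyperbolicPlane_eq_span]
  exact ⟨rfl, finrank_span_indicator_axes⟩

/-- for a discriminant form of type `p^{ε2}` with `ε = (-1|p)`, i.e. the
hyperbolic plane `(ℤ/pℤ)² ` with `q(x,y) = xy/p` generated by the isotropic elements
`γ₁ = (1,0)`, `γ₂ = (0,1)` with `(γ₁,γ₂) = 1/p`, the space of Weil invariants is
2-dimensional and is spanned by the characteristic functions of the two maximal
isotropic subgroups `⟨γ₁⟩ = {(t,0)}` and `⟨γ₂⟩ = {(0,t)}`. -/
theorem weil_invariants_hyperbolic_plane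
    (p : ℕ) [Fact p.Prime] (hp : p ≠ 2)
    (q : (ZMod p × ZMod p) → ℚ)
    (hq : ∀ x : ZMod p × ZMod p, q x = ((x.1.val * x.2.val : ℕ) : ℚ) / (p : ℚ))
    (σ : ℂ)
    (hMilgram : ∑ γ : ZMod p × ZMod p, e (q γ)
      = (Real.sqrt (Fintype.card (ZMod p × ZMod p)) : ℂ) * σ) :
    weilInvariants (ZMod p × ZMod p) q σ
      = Submodule.span ℂ
          {(fun x : ZMod p × ZMod p => if x.2 = 0 then (1 : ℂ) else 0),
           (fun x : ZMod p × ZMod p => if x.1 = 0 then (1 : ℂ) else 0)}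
    ∧ Module.finrank ℂ ↥(weilInvariants (ZMod p × ZMod p) q σ) = 2 :=
  weil_invariants_hyperbolic_plane_general p q hq σ hMilgram
end

section
/- Let D be a discriminant form of even signature and H an isotropic subgroup of D. Then H^⊥/H, with the quadratic form induced by q, is a discriminant form of the same signature as D, and |H^⊥/H| = |D|/|H|^2. -/
open scoped Classical

/-- The orthogonal complement `H^⊥` of a subgroup `H` of a discriminant form `(D, q)`:
the elements pairing integrally with every element of `H`. -/
def perpSet (D : Type*) [AddCommGroup D] (q : D → ℚ) (H : AddSubgroup D) : Set D :=
  {γ | ∀ h ∈ H, ∃ k : ℤ, q (γ + h) - q γ - q h = (k : ℚ)}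

-- basic e lemmas
lemma e_add (x y : ℚ) : e (x + y) = e x * e y := by
  rw [e, e, e, ← Complex.exp_add]; push_cast; ring_nf

lemma e_eq_one_iff {x : ℚ} : e x = 1 ↔ ∃ k : ℤ, x = (k : ℚ) := by
  constructor
  · intro h
    rw [e, Complex.exp_eq_one_iff] at h
    obtain ⟨n, hn⟩ := h
    refine ⟨n, ?_⟩
    have h2 : (2*(Real.pi:ℂ)*Complex.I) ≠ 0 := by
      simp [Real.pi_ne_zero, Complex.I_ne_zero]
    have hxn : (2*(Real.pi:ℂ)*Complex.I) * (x:ℂ) = (2*(Real.pi:ℂ)*Complex.I) * (n:ℂ) := by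
      linear_combination hn
    have : ((x:ℂ)) = (n:ℂ) := mul_left_cancel₀ h2 hxn
    exact_mod_cast this
  · rintro ⟨k, rfl⟩; exact e_int k

lemma e_int_add (x : ℚ) (k : ℤ) : e (x + k) = e x := by
  rw [e_add, e_int, mul_one]

section DF
variable {D : Type} [AddCommGroup D] [Fintype D] {q : D → ℚ}

/-- The (exact, `ℚ`-valued) bilinear form. -/
def bb (q : D → ℚ) (x y : D) : ℚ := q (x + y) - q x - q y

omit [Fintype D] in
lemma bb_symm (x y : D) : bb q x y = bb q y x := by
  unfold bb; rw [add_comm]; ring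

lemma q_zero_int (hD : IsDiscForm D q) : ∃ k : ℤ, q 0 = (k : ℚ) := by
  obtain ⟨k, hk⟩ := hD.quad 0 (0 : D)
  refine ⟨k, ?_⟩
  simpa using hk

lemma bb_zero_left (hD : IsDiscForm D q) (y : D) : ∃ k : ℤ, bb q 0 y = (k : ℚ) := by
  obtain ⟨k, hk⟩ := q_zero_int hD
  exact ⟨-k, by unfold bb; rw [zero_add, hk]; push_cast; ring⟩

lemma bb_add_left (hD : IsDiscForm D q) (x y z : D) :
    ∃ k : ℤ, bb q (x + y) z - bb q x z - bb q y z = (k : ℚ) := by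
  obtain ⟨k, hk⟩ := hD.bilin x y z
  exact ⟨k, by unfold bb; linear_combination hk⟩

lemma e_bb_zero_left (hD : IsDiscForm D q) (y : D) : e (bb q 0 y) = 1 := by
  obtain ⟨k, hk⟩ := bb_zero_left hD y
  rw [hk]; exact e_int k

lemma e_bb_add_left (hD : IsDiscForm D q) (x y z : D) :
    e (bb q (x + y) z) = e (bb q x z) * e (bb q y z) := by
  obtain ⟨k, hk⟩ := bb_add_left hD x y z
  have : bb q (x + y) z = (bb q x z + bb q y z) + k := by linear_combination hk
  rw [this, e_int_add, e_add]

/-- The character `x ↦ e(b(x,γ))` on `D`. -/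
noncomputable def chiD (hD : IsDiscForm D q) (γ : D) : AddChar D ℂ where
  toFun x := e (bb q x γ)
  map_zero_eq_one' := e_bb_zero_left hD γ
  map_add_eq_mul' x y := e_bb_add_left hD x y γ

@[simp] lemma chiD_apply (hD : IsDiscForm D q) (γ x : D) : chiD hD γ x = e (bb q x γ) := rfl

/-- The character `h ↦ e(b(h,γ))` on a subgroup `K`. -/
noncomputable def chiK (hD : IsDiscForm D q) (K : AddSubgroup D) (γ : D) : AddChar K ℂ where
  toFun h := e (bb q (h : D) γ)
  map_zero_eq_one' := e_bb_zero_left hD γ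
  map_add_eq_mul' x y := e_bb_add_left hD x y γ

@[simp] lemma chiK_apply (hD : IsDiscForm D q) (K : AddSubgroup D) (γ : D) (h : K) :
    chiK hD K γ h = e (bb q (h : D) γ) := rfl

lemma sum_chiD (hD : IsDiscForm D q) (γ : D) :
    ∑ x : D, e (bb q x γ) = if γ = 0 then (Fintype.card D : ℂ) else 0 := by
  have := AddChar.sum_eq_ite (chiD hD γ)
  simp only [chiD_apply] at this
  rw [this]
  congr 1
  simp only [AddChar.eq_zero_iff, chiD_apply, eq_iff_iff]
  constructor
  · intro h
    refine hD.nondeg γ (fun β => ?_)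
    obtain ⟨k, hk⟩ := (e_eq_one_iff).mp (h β)
    have h2 : bb q γ β = (k : ℚ) := by rw [bb_symm]; exact hk
    exact ⟨k, by unfold bb at h2; linear_combination h2⟩
  · rintro rfl x
    rw [bb_symm]; exact e_bb_zero_left hD x

omit [AddCommGroup D] in
lemma sum_ite_mem_set {S : Set D} (f : D → ℂ) :
    ∑ x : D, (if x ∈ S then f x else 0) = ∑ x : S, f x := by
  rw [← Finset.sum_filter]
  exact Finset.sum_subtype _ (by simp) f

lemma chiK_eq_zero_iff (hD : IsDiscForm D q) (K : AddSubgroup D) (γ : D) :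
    chiK hD K γ = 0 ↔ γ ∈ perpSet D q K := by
  rw [AddChar.eq_zero_iff]
  constructor
  · intro h h' hh'
    obtain ⟨k, hk⟩ := e_eq_one_iff.mp (h ⟨h', hh'⟩)
    have h2 : bb q γ h' = (k : ℚ) := by rw [bb_symm]; exact hk
    exact ⟨k, by unfold bb at h2; linear_combination h2⟩
  · intro h x
    obtain ⟨k, hk⟩ := h (x : D) x.2
    have h2 : bb q (x : D) γ = (k : ℚ) := by rw [bb_symm]; unfold bb; linear_combination hk
    rw [chiK_apply, h2]
    exact e_int k

lemma sum_chiK (hD : IsDiscForm D q) (K : AddSubgroup D) (γ : D) :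
    ∑ h : K, e (bb q (h : D) γ)
      = if γ ∈ perpSet D q K then (Nat.card K : ℂ) else 0 := by
  have := AddChar.sum_eq_ite (chiK hD K γ)
  simp only [chiK_apply] at this
  rw [this, Nat.card_eq_fintype_card]
  exact if_congr (chiK_eq_zero_iff hD K γ) rfl rfl

lemma card_mul_card_perp (hD : IsDiscForm D q) (K : AddSubgroup D) :
    Nat.card K * Nat.card (perpSet D q K) = Fintype.card D := by
  have key : ((Nat.card K : ℂ)) * ((Nat.card (perpSet D q K) : ℂ)) = (Fintype.card D : ℂ) := by
    have hswap : ∑ γ : D, ∑ h : K, e (bb q (h : D) γ)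
        = ∑ h : K, ∑ γ : D, e (bb q (h : D) γ) := Finset.sum_comm
    have h1 : ∑ h : K, ∑ γ : D, e (bb q (h : D) γ) = (Fintype.card D : ℂ) := by
      have hterm : ∀ h : K, ∑ γ : D, e (bb q (h : D) γ)
          = if (h : D) = 0 then (Fintype.card D : ℂ) else 0 := by
        intro h
        rw [Finset.sum_congr rfl (fun γ _ => by rw [bb_symm])]
        exact sum_chiD hD (h : D)
      rw [Finset.sum_congr rfl (fun h _ => hterm h)]
      simp only [ZeroMemClass.coe_eq_zero]
      simp [Finset.sum_ite_eq']
    have h2 : ∑ γ : D, ∑ h : K, e (bb q (h : D) γ)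
        = (Nat.card K : ℂ) * (Nat.card (perpSet D q K) : ℂ) := by
      rw [Finset.sum_congr rfl (fun γ _ => sum_chiK hD K γ)]
      have : ∀ γ : D, (if γ ∈ perpSet D q K then ((Nat.card K : ℂ)) else 0)
          = (if γ ∈ perpSet D q K then (fun _ : D => (Nat.card K : ℂ)) γ else 0) := fun _ => rfl
      rw [Finset.sum_congr rfl (fun γ _ => this γ), sum_ite_mem_set]
      rw [Finset.sum_const, Finset.card_univ]
      rw [Nat.card_eq_fintype_card]
      simp [mul_comm]
    rw [← h2, hswap, h1]
  exact_mod_cast key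

/-- `H^⊥` as a subgroup. -/
def perpSub (hD : IsDiscForm D q) (K : AddSubgroup D) : AddSubgroup D where
  carrier := perpSet D q K
  zero_mem' := by
    intro h hh
    obtain ⟨k, hk⟩ := bb_zero_left hD h
    exact ⟨k, by unfold bb at hk; linear_combination hk⟩
  add_mem' := by
    intro a b ha hb h hh
    obtain ⟨k1, hk1⟩ := ha h hh
    obtain ⟨k2, hk2⟩ := hb h hh
    obtain ⟨k3, hk3⟩ := bb_add_left hD a b h
    refine ⟨k3 + k1 + k2, ?_⟩
    unfold bb at hk3
    push_cast
    linear_combination hk3 + hk1 + hk2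
  neg_mem' := by
    intro a ha h hh
    obtain ⟨k1, hk1⟩ := ha h hh
    obtain ⟨k3, hk3⟩ := bb_add_left hD (-a) a h
    obtain ⟨k0, hk0⟩ := bb_zero_left hD h
    refine ⟨k0 - k1 - k3, ?_⟩
    unfold bb at hk3 hk0
    rw [neg_add_cancel] at hk3
    push_cast
    linear_combination hk0 - hk1 - hk3

lemma mem_perpSub (hD : IsDiscForm D q) (K : AddSubgroup D) (γ : D) :
    γ ∈ perpSub hD K ↔ γ ∈ perpSet D q K := Iff.rfl

end DF

/-- for an isotropic subgroup `H` of a discriminant form `D` of even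
signature, `H^⊥/H` (realised as the quotient of `H^⊥` by the relation "differ by an
element of `H`") is again a discriminant form: `q` descends to `H^⊥/H` and is
nondegenerate there; moreover `|H^⊥/H| = |D|/|H|²` and `H^⊥/H` has the same signature
as `D`, expressed via the Milgram formula (the Gauss sum of `H^⊥/H`, which equals
`(1/|H|) ∑_{γ ∈ H^⊥} e(q(γ))`, equals `√|H^⊥/H| · σ` with `σ = e(sign(D)/8)`). -/
theorem isotropic_quotient_disc_form
    (D : Type) [AddCommGroup D] [Fintype D] (q : D → ℚ) (hD : IsDiscForm D q)
    (σ : ℂ)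
    (hMilgram : ∑ γ : D, e (q γ) = (Real.sqrt (Fintype.card D) : ℂ) * σ)
    (hEvenSig : σ ^ 4 = 1)
    (H : AddSubgroup D) (hH : ∀ h ∈ H, ∃ k : ℤ, q h = (k : ℚ)) :
    (∀ γ ∈ perpSet D q H, ∀ h ∈ H, ∃ k : ℤ, q (γ + h) - q γ = (k : ℚ))
    ∧ (∀ γ ∈ perpSet D q H,
        (∀ β ∈ perpSet D q H, ∃ k : ℤ, q (γ + β) - q γ - q β = (k : ℚ)) → γ ∈ H)
    ∧ Nat.card H * Nat.card H *
        Nat.card (Quot (fun x y : perpSet D q H => x.1 - y.1 ∈ H)) = Fintype.card D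
    ∧ ∑ γ : perpSet D q H, e (q γ.1)
        = (Nat.card H : ℂ) *
          (Real.sqrt (Nat.card (Quot (fun x y : perpSet D q H => x.1 - y.1 ∈ H))) : ℂ)
          * σ := by
  set P : AddSubgroup D := perpSub hD H with hPdef
  -- H is contained in its perp
  have hHP : H ≤ P := by
    intro h hh h' hh'
    obtain ⟨k1, e1⟩ := hH (h + h') (add_mem hh hh')
    obtain ⟨k2, e2⟩ := hH h hh
    obtain ⟨k3, e3⟩ := hH h' hh'
    exact ⟨k1 - k2 - k3, by push_cast; linear_combination e1 - e2 - e3⟩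
  -- identification of the two subtypes
  have cardPS : Nat.card (perpSet D q H) = Nat.card P :=
    Nat.card_congr ⟨fun x => ⟨x.1, x.2⟩, fun x => ⟨x.1, x.2⟩, fun _ => rfl, fun _ => rfl⟩
  have c1 : Nat.card H * Nat.card P = Fintype.card D := by
    rw [← cardPS]; exact card_mul_card_perp hD H
  -- Part 1
  have part1 : ∀ γ ∈ perpSet D q H, ∀ h ∈ H, ∃ k : ℤ, q (γ + h) - q γ = (k : ℚ) := by
    intro γ hγ h hh
    obtain ⟨k1, e1⟩ := hγ h hh
    obtain ⟨k2, e2⟩ := hH h hh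
    exact ⟨k1 + k2, by push_cast; linear_combination e1 + e2⟩
  -- Part 2
  have part2 : ∀ γ ∈ perpSet D q H,
      (∀ β ∈ perpSet D q H, ∃ k : ℤ, q (γ + β) - q γ - q β = (k : ℚ)) → γ ∈ H := by
    intro γ hγ hpair
    have hγP : γ ∈ perpSub hD P := fun β hβ => hpair β hβ
    have hle : H ≤ perpSub hD P := by
      intro h hh β hβ
      obtain ⟨k, hk⟩ := hβ h hh
      refine ⟨k, ?_⟩
      rw [add_comm]
      linear_combination hk
    have cardPP : Nat.card (perpSet D q P) = Nat.card (perpSub hD P) :=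
      Nat.card_congr ⟨fun x => ⟨x.1, x.2⟩, fun x => ⟨x.1, x.2⟩, fun _ => rfl, fun _ => rfl⟩
    have c2 : Nat.card P * Nat.card (perpSub hD P) = Fintype.card D := by
      rw [← cardPP]; exact card_mul_card_perp hD P
    have hPpos : 0 < Nat.card P := Nat.card_pos
    have hcard : Nat.card (perpSub hD P) = Nat.card H := by
      have : Nat.card P * Nat.card (perpSub hD P) = Nat.card P * Nat.card H := by
        rw [c2, ← c1]; ring
      exact Nat.eq_of_mul_eq_mul_left hPpos this
    have hEq : H = perpSub hD P :=
      AddSubgroup.eq_of_le_of_card_ge hle (le_of_eq hcard)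
    rw [hEq]
    exact hγP
  -- the quotient
  set HP : AddSubgroup P := H.addSubgroupOf P with hHPdef
  have qEquiv : Quot (fun x y : perpSet D q H => x.1 - y.1 ∈ H) ≃ (P ⧸ HP) := by
    refine ⟨Quot.lift (fun x => QuotientAddGroup.mk (⟨x.1, x.2⟩ : P)) ?_,
      fun z => Quotient.liftOn' z
        (fun p => Quot.mk (fun x y : perpSet D q H => x.1 - y.1 ∈ H) ⟨p.1, p.2⟩) ?_, ?_, ?_⟩
    · intro x y hxy
      apply (QuotientAddGroup.eq (s := HP)).mpr
      rw [hHPdef, AddSubgroup.mem_addSubgroupOf]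
      have : ((-(⟨x.1, x.2⟩ : P) + ⟨y.1, y.2⟩ : P) : D) = -(x.1 - y.1) := by
        push_cast; abel
      rw [this]
      exact neg_mem hxy
    · intro p p' hpp'
      have h1 : -p + p' ∈ HP := QuotientAddGroup.leftRel_apply.mp hpp'
      rw [hHPdef, AddSubgroup.mem_addSubgroupOf] at h1
      apply Quot.sound
      have : (p : D) - (p' : D) = -(((-p + p' : P) : D)) := by push_cast; abel
      show (p : D) - (p' : D) ∈ H
      rw [this]
      exact neg_mem h1
    · intro z
      induction z using Quot.ind with
      | _ x => rfl
    · intro z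
      induction z using Quotient.inductionOn' with
      | _ p => rfl
  have cardQuot : Nat.card (Quot (fun x y : perpSet D q H => x.1 - y.1 ∈ H))
      = Nat.card (P ⧸ HP) := Nat.card_congr qEquiv
  have cardHP : Nat.card HP = Nat.card H :=
    Nat.card_congr (AddSubgroup.addSubgroupOfEquivOfLe hHP).toEquiv
  have lagrange : Nat.card P = Nat.card (P ⧸ HP) * Nat.card HP :=
    AddSubgroup.card_eq_card_quotient_mul_card_addSubgroup HP
  -- Part 3
  have part3 : Nat.card H * Nat.card H *
      Nat.card (Quot (fun x y : perpSet D q H => x.1 - y.1 ∈ H)) = Fintype.card D := by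
    rw [cardQuot, ← c1, lagrange, cardHP]
    ring
  refine ⟨part1, part2, part3, ?_⟩
  -- Part 4
  have hsplit : ∀ (γ h : D), h ∈ H → e (q (γ + h)) = e (q γ) * e (bb q γ h) := by
    intro γ h hh
    obtain ⟨k, hk⟩ := hH h hh
    have : q (γ + h) = q γ + bb q γ h + k := by unfold bb; linear_combination hk
    rw [this, e_int_add, e_add]
  have T1 : ∑ h : H, ∑ γ : D, e (q (γ + (h : D)))
      = (Nat.card H : ℂ) * ((Real.sqrt (Fintype.card D) : ℂ) * σ) := by
    have hstep : ∀ h : H, ∑ γ : D, e (q (γ + (h : D))) = ∑ γ : D, e (q γ) := by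
      intro h
      exact Fintype.sum_equiv (Equiv.addRight (h : D)) _ _ (fun γ => rfl)
    rw [Finset.sum_congr rfl (fun h _ => hstep h), hMilgram, Finset.sum_const,
      Finset.card_univ, nsmul_eq_mul, Nat.card_eq_fintype_card]
  have T2 : ∑ γ : D, ∑ h : H, e (q (γ + (h : D)))
      = (Nat.card H : ℂ) * ∑ γ : perpSet D q H, e (q γ.1) := by
    have hinner : ∀ γ : D, ∑ h : H, e (q (γ + (h : D)))
        = (if γ ∈ perpSet D q H then (fun x => (Nat.card H : ℂ) * e (q x)) γ else 0) := by
      intro γ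
      rw [Finset.sum_congr rfl (fun (h : H) _ => hsplit γ h.1 h.2), ← Finset.mul_sum,
        Finset.sum_congr rfl (fun (i : H) _ => by rw [bb_symm]), sum_chiK hD H γ]
      split_ifs <;> ring
    rw [Finset.sum_congr rfl (fun γ _ => hinner γ), sum_ite_mem_set, Finset.mul_sum]
  have hHne : ((Nat.card H : ℂ)) ≠ 0 := by
    exact_mod_cast (Nat.card_pos (α := H)).ne'
  have key : ∑ γ : perpSet D q H, e (q γ.1) = (Real.sqrt (Fintype.card D) : ℂ) * σ := by
    have comm : ∑ γ : D, ∑ h : H, e (q (γ + (h : D)))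
        = ∑ h : H, ∑ γ : D, e (q (γ + (h : D))) := Finset.sum_comm
    have := (T2.symm.trans comm).trans T1
    exact mul_left_cancel₀ hHne this
  have sqrtEq : Real.sqrt (Fintype.card D)
      = (Nat.card H : ℝ) *
        Real.sqrt (Nat.card (Quot (fun x y : perpSet D q H => x.1 - y.1 ∈ H))) := by
    have h3 : ((Fintype.card D : ℕ) : ℝ)
        = ((Nat.card H : ℝ)) ^ 2
          * ((Nat.card (Quot (fun x y : perpSet D q H => x.1 - y.1 ∈ H)) : ℕ) : ℝ) := by
      rw [← part3]; push_cast; ring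
    rw [h3, Real.sqrt_mul (by positivity), Real.sqrt_sq (by positivity)]
  rw [key, sqrtEq]
  push_cast
  ring
end
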